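/- arXiv:1804.04885 — 3 statements merged into one kernel-verified Lean document; each statement's English description precedes it below -/
import Mathlib

section
/- Let n ≥ 1 be an integer. Then (2n+1)·Σ_{k=1}^{n-1} ((−1)^{k+1}/(2k+1))·C(n,k) + Σ_{k=1}^{n} ((−1)^{k−1}/(2k−1))·C(n,k) = 2n + (−1)^n, and consequently (1/(4n(n+1)))·[ (2n + Σ_{k=1}^{n} ((−1)^{k+1}/(2k+1))·C(n,k)) + (2n+1)·Σ_{k=1}^{n} ((−1)^{k−1}/(2k−1))·C(n,k) ] = 1 − Σ_{k=1}^{n} ((−1)^{k+1}/(2k+1))·C(n,k). -/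
open Finset

/-!
Put `U n = ∑_{k=0}^{n} (-1)^k C(n,k) / (2k+1)` (which is `∫₀¹ (1 - x²)ⁿ dx`). The first sum of the
statement is `1 - U n`. The second is `(2n+1) U n - 1`: after the shift `k = j + 1` this is a
termwise consequence of `(2n+1) C(n,j) = (2j+1) C(n+1,j+1) + C(n,j+1)`, because
`∑_j (-1)^j C(n+1,j+1) = 1`. Both claims are then linear identities in `U n`.
-/

theorem Finset.sum_Icc_one_eq_sum_range {M : Type*} [AddCommMonoid M] (f : ℕ → M) (n : ℕ) :
    ∑ k ∈ Icc 1 n, f k = ∑ k ∈ range n, f (k + 1) := by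
  induction n with
  | zero => rfl
  | succ n ih => rw [sum_Icc_succ_top (by omega), ih, sum_range_succ]

theorem Nat.two_mul_add_one_mul_choose (n j : ℕ) :
    (2 * n + 1) * n.choose j = (2 * j + 1) * (n + 1).choose (j + 1) + n.choose (j + 1) := by
  have h := Nat.add_one_mul_choose_eq n j
  rw [Nat.choose_succ_succ] at h ⊢
  linarith

theorem Finset.sum_range_neg_one_pow_mul_choose_succ {R : Type*} [CommRing R] (n : ℕ) :
    ∑ j ∈ range (n + 1), (-1 : R) ^ j * (n + 1).choose (j + 1) = 1 := by
  have h := Int.alternating_sum_range_choose_of_ne (n := n + 1) n.succ_ne_zero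
  rw [sum_range_succ'] at h
  have h' := congrArg (Int.cast : ℤ → R) h
  push_cast [pow_succ, mul_neg_one, neg_mul, sum_neg_distrib, Nat.choose_zero_right] at h'
  linear_combination -h'

noncomputable def altOddChooseSum (n : ℕ) : ℝ :=
  ∑ k ∈ range (n + 1), (-1) ^ k / (2 * k + 1) * n.choose k

theorem sum_Icc_neg_one_pow_succ_div_mul_choose (n : ℕ) :
    ∑ k ∈ Icc 1 n, (-1 : ℝ) ^ (k + 1) / (2 * (k : ℝ) + 1) * (n.choose k : ℝ) =
      1 - altOddChooseSum n := by
  rw [altOddChooseSum, sum_range_succ', ← sum_Icc_one_eq_sum_range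
    (fun k ↦ (-1 : ℝ) ^ k / (2 * k + 1) * n.choose k)]
  simp [pow_succ, neg_div]

theorem sum_Icc_neg_one_pow_pred_div_mul_choose (n : ℕ) :
    ∑ k ∈ Icc 1 n, (-1 : ℝ) ^ (k - 1) / (2 * (k : ℝ) - 1) * (n.choose k : ℝ) =
      (2 * n + 1) * altOddChooseSum n - 1 := by
  have hshift : ∑ k ∈ Icc 1 n, (-1 : ℝ) ^ (k - 1) / (2 * (k : ℝ) - 1) * (n.choose k : ℝ) =
      ∑ j ∈ range (n + 1), (-1 : ℝ) ^ j / (2 * j + 1) * n.choose (j + 1) := by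
    rw [sum_Icc_one_eq_sum_range, sum_range_succ, Nat.choose_succ_self]
    push_cast
    simp only [mul_zero, add_zero]
    refine sum_congr rfl fun j _ ↦ ?_
    ring_nf
  have hterm : ∀ j : ℕ, (2 * n + 1) * ((-1 : ℝ) ^ j / (2 * j + 1) * n.choose j) -
      (-1 : ℝ) ^ j / (2 * j + 1) * n.choose (j + 1) = (-1) ^ j * (n + 1).choose (j + 1) := by
    intro j
    have h : ((2 * n + 1 : ℕ) : ℝ) * n.choose j =
        ((2 * j + 1 : ℕ) : ℝ) * (n + 1).choose (j + 1) + n.choose (j + 1) := by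
      exact_mod_cast Nat.two_mul_add_one_mul_choose n j
    push_cast at h
    calc _ = (-1 : ℝ) ^ j / (2 * j + 1) * ((2 * j + 1) * (n + 1).choose (j + 1)) := by
          linear_combination (-1 : ℝ) ^ j / (2 * j + 1) * h
      _ = _ := by field_simp
  rw [hshift, altOddChooseSum, mul_sum]
  have h := sum_range_neg_one_pow_mul_choose_succ (R := ℝ) n
  simp only [← hterm, sum_sub_distrib] at h
  linarith

/-- For every integer `n ≥ 1`,
`(2n+1)·Σ_{k=1}^{n-1} ((−1)^{k+1}/(2k+1))·C(n,k) + Σ_{k=1}^{n} ((−1)^{k−1}/(2k−1))·C(n,k)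
  = 2n + (−1)^n`, and consequently
`(1/(4n(n+1)))·[(2n + Σ_{k=1}^{n} ((−1)^{k+1}/(2k+1))·C(n,k))
  + (2n+1)·Σ_{k=1}^{n} ((−1)^{k−1}/(2k−1))·C(n,k)]
  = 1 − Σ_{k=1}^{n} ((−1)^{k+1}/(2k+1))·C(n,k)`. -/
theorem stmt0 (n : ℕ) (hn : 1 ≤ n) :
    (2 * (n : ℝ) + 1) *
        (∑ k ∈ Finset.Icc 1 (n - 1), (-1 : ℝ) ^ (k + 1) / (2 * (k : ℝ) + 1) * (n.choose k : ℝ)) +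
      (∑ k ∈ Finset.Icc 1 n, (-1 : ℝ) ^ (k - 1) / (2 * (k : ℝ) - 1) * (n.choose k : ℝ)) =
      2 * (n : ℝ) + (-1 : ℝ) ^ n ∧
    (1 / (4 * (n : ℝ) * ((n : ℝ) + 1))) *
        ((2 * (n : ℝ) +
            ∑ k ∈ Finset.Icc 1 n, (-1 : ℝ) ^ (k + 1) / (2 * (k : ℝ) + 1) * (n.choose k : ℝ)) +
          (2 * (n : ℝ) + 1) *
            ∑ k ∈ Finset.Icc 1 n, (-1 : ℝ) ^ (k - 1) / (2 * (k : ℝ) - 1) * (n.choose k : ℝ)) =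
      1 - ∑ k ∈ Finset.Icc 1 n, (-1 : ℝ) ^ (k + 1) / (2 * (k : ℝ) + 1) * (n.choose k : ℝ) := by
  obtain ⟨m, rfl⟩ : ∃ m, n = m + 1 := ⟨n - 1, by omega⟩
  have hlast := sum_Icc_succ_top (Nat.le_add_left 1 m)
    (fun k ↦ (-1 : ℝ) ^ (k + 1) / (2 * (k : ℝ) + 1) * ((m + 1).choose k : ℝ))
  rw [Nat.choose_self, sum_Icc_neg_one_pow_succ_div_mul_choose] at hlast
  rw [Nat.add_sub_cancel, sum_Icc_neg_one_pow_succ_div_mul_choose,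
    sum_Icc_neg_one_pow_pred_div_mul_choose, eq_sub_of_add_eq hlast.symm]
  push_cast
  constructor <;>
  · field_simp
    ring
end

section
/- Let n ≥ 1 be an integer and x > 0. Then ∫_ℝ sign(x−y)·e^{−|x−y|}·e^{−(2n+1)|y|} dy = ((2n+1)/(2n(n+1)))·(e^{−x} − e^{−(2n+1)x}). -/
/-!
With `a = 2n + 1`, the integrand is a single exponential on each of `(-∞, 0]`, `(0, x)` and
`(x, ∞)`, namely `e^{-x} e^{(a+1)y}`, `e^{-x} e^{(1-a)y}` and `-e^{x} e^{-(a+1)y}`.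
Integrating gives `e^{-x}/(a+1) + (e^{-x} - e^{-ax})/(a-1) - e^{-ax}/(a+1)`, which is
`(1/(a+1) + 1/(a-1)) (e^{-x} - e^{-ax})`, and `1/(a+1) + 1/(a-1) = 2a/(a²-1) = (2n+1)/(2n(n+1))`.
-/

open MeasureTheory Real Set

@[fun_prop]
lemma Real.measurable_sign : Measurable Real.sign :=
  Measurable.ite measurableSet_Iio measurable_const
    (Measurable.ite measurableSet_Ioi measurable_const measurable_const)

lemma integrable_exp_neg_mul_abs {a : ℝ} (ha : 0 < a) :
    Integrable fun y : ℝ ↦ exp (-a * |y|) := by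
  rw [← integrableOn_univ, ← Iic_union_Ioi (a := (0 : ℝ)), integrableOn_union]
  constructor
  · refine (integrableOn_exp_mul_Iic ha 0).congr_fun (fun y hy ↦ ?_) measurableSet_Iic
    rw [abs_of_nonpos hy, mul_neg, neg_mul, neg_neg]
  · refine (integrableOn_exp_mul_Ioi (neg_neg_of_pos ha) 0).congr_fun (fun y hy ↦ ?_)
      measurableSet_Ioi
    rw [abs_of_pos hy]

lemma integral_eq_Iic_add_intervalIntegral_add_Ioi {E : Type*} [NormedAddCommGroup E]
    [NormedSpace ℝ E] {f : ℝ → E} (hf : Integrable f) (a b : ℝ) :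
    ∫ y, f y = (∫ y in Iic a, f y) + (∫ y in a..b, f y) + ∫ y in Ioi b, f y := by
  rw [← intervalIntegral.integral_Iic_add_Ioi (b := b) hf.integrableOn hf.integrableOn,
    ← intervalIntegral.integral_Iic_sub_Iic hf.integrableOn hf.integrableOn]
  abel

lemma intervalIntegral_exp_mul {b : ℝ} (hb : b ≠ 0) (c d : ℝ) :
    ∫ y in c..d, exp (b * y) = (exp (b * d) - exp (b * c)) / b := by
  rw [intervalIntegral.integral_comp_mul_left (fun y ↦ exp y) hb, integral_exp, smul_eq_mul,
    inv_mul_eq_div]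

noncomputable def signedExpKernel (a x y : ℝ) : ℝ :=
  Real.sign (x - y) * exp (-|x - y|) * exp (-a * |y|)

namespace signedExpKernel

variable {a x y : ℝ}

lemma integrable (ha : 0 < a) : Integrable (signedExpKernel a x) := by
  refine (integrable_exp_neg_mul_abs ha).mono' (by unfold signedExpKernel; fun_prop)
    (Filter.Eventually.of_forall fun y ↦ ?_)
  have hsign : |Real.sign (x - y)| ≤ 1 := by
    rcases Real.sign_apply_eq (x - y) with h | h | h <;> simp [h]
  have hexp : exp (-|x - y|) ≤ 1 := exp_le_one_iff.2 (neg_nonpos.2 (abs_nonneg _))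
  rw [signedExpKernel, Real.norm_eq_abs, abs_mul, abs_mul, abs_exp, abs_exp]
  calc |Real.sign (x - y)| * exp (-|x - y|) * exp (-a * |y|) ≤ 1 * 1 * exp (-a * |y|) := by
        gcongr
    _ = exp (-a * |y|) := by ring

lemma apply_of_nonpos_of_lt (hy : y ≤ 0) (hyx : y < x) :
    signedExpKernel a x y = exp (-x) * exp ((a + 1) * y) := by
  rw [signedExpKernel, Real.sign_of_pos (sub_pos.2 hyx), abs_of_pos (sub_pos.2 hyx),
    abs_of_nonpos hy, one_mul, ← exp_add, ← exp_add]
  ring_nf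

lemma apply_of_nonneg_of_lt (hy : 0 ≤ y) (hyx : y < x) :
    signedExpKernel a x y = exp (-x) * exp ((1 - a) * y) := by
  rw [signedExpKernel, Real.sign_of_pos (sub_pos.2 hyx), abs_of_pos (sub_pos.2 hyx),
    abs_of_nonneg hy, one_mul, ← exp_add, ← exp_add]
  ring_nf

lemma apply_of_nonneg_of_gt (hy : 0 ≤ y) (hxy : x < y) :
    signedExpKernel a x y = -(exp x * exp (-(a + 1) * y)) := by
  rw [signedExpKernel, Real.sign_of_neg (sub_neg.2 hxy), abs_of_neg (sub_neg.2 hxy),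
    abs_of_nonneg hy, neg_one_mul, neg_mul, ← exp_add, ← exp_add]
  ring_nf

lemma setIntegral_Iic_zero (ha : -1 < a) (hx : 0 < x) :
    ∫ y in Iic 0, signedExpKernel a x y = exp (-x) / (a + 1) := by
  rw [setIntegral_congr_fun measurableSet_Iic fun y hy ↦
      apply_of_nonpos_of_lt hy (hy.trans_lt hx),
    integral_const_mul, integral_exp_mul_Iic (by linarith), mul_zero, exp_zero, mul_one_div]

lemma intervalIntegral_zero (ha : a ≠ 1) (hx : 0 ≤ x) :
    ∫ y in (0)..x, signedExpKernel a x y = (exp (-x) - exp (-a * x)) / (a - 1) := by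
  rw [intervalIntegral.integral_congr_Ioo_of_le hx fun y hy ↦ apply_of_nonneg_of_lt hy.1.le hy.2,
    intervalIntegral.integral_const_mul, intervalIntegral_exp_mul (sub_ne_zero.2 ha.symm),
    mul_zero, exp_zero, mul_div_assoc', mul_sub, ← exp_add, mul_one, ← neg_div_neg_eq, neg_sub,
    neg_sub]
  ring_nf

lemma setIntegral_Ioi (ha : -1 < a) (hx : 0 ≤ x) :
    ∫ y in Ioi x, signedExpKernel a x y = -exp (-a * x) / (a + 1) := by
  rw [setIntegral_congr_fun measurableSet_Ioi fun y hy ↦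
      apply_of_nonneg_of_gt (hx.trans hy.le) hy,
    integral_neg, integral_const_mul, integral_exp_mul_Ioi (by linarith), neg_div_neg_eq,
    mul_div_assoc', ← exp_add, neg_div]
  ring_nf

theorem integral (ha : 1 < a) (hx : 0 < x) :
    ∫ y, signedExpKernel a x y = 2 * a / (a ^ 2 - 1) * (exp (-x) - exp (-a * x)) := by
  rw [integral_eq_Iic_add_intervalIntegral_add_Ioi (integrable (by linarith)) 0 x,
    setIntegral_Iic_zero (by linarith) hx, intervalIntegral_zero ha.ne' hx.le,
    setIntegral_Ioi (by linarith) hx.le]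
  have h1 : a - 1 ≠ 0 := by linarith
  have h2 : a + 1 ≠ 0 := by linarith
  have h3 : a ^ 2 - 1 ≠ 0 := by nlinarith
  field_simp
  ring

end signedExpKernel

/-- For every integer `n ≥ 1` and real `x > 0`,
`∫_ℝ sign(x−y)·e^{−|x−y|}·e^{−(2n+1)|y|} dy = ((2n+1)/(2n(n+1)))·(e^{−x} − e^{−(2n+1)x})`. -/
theorem stmt2 (n : ℕ) (hn : 1 ≤ n) (x : ℝ) (hx : 0 < x) :
    ∫ y : ℝ, Real.sign (x - y) * Real.exp (-|x - y|) * Real.exp (-(2 * (n : ℝ) + 1) * |y|) =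
      ((2 * (n : ℝ) + 1) / (2 * (n : ℝ) * ((n : ℝ) + 1))) *
        (Real.exp (-x) - Real.exp (-(2 * (n : ℝ) + 1) * x)) := by
  have hn' : (1 : ℝ) ≤ n := by exact_mod_cast hn
  refine (signedExpKernel.integral (by linarith) hx).trans ?_
  congr 1
  rw [div_eq_div_iff (by nlinarith) (by positivity)]
  ring
end

section
/- Let n ≥ 1 be an integer. Then 1/2 + Σ_{j=1}^{n+1} (−1)^{j+1}·((2j−3)/(2(2j−1)))·C(n+1,j) = −Σ_{k=1}^{n} (2k)!!/(2k+1)!!. In particular, the coefficient c_1 of the auxiliary function h equals −B_n, where B_n = Σ_{k=1}^{n} (2k)!!/(2k+1)!!. -/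
/-!
Since `(2j - 3)/(2(2j - 1)) = 1/2 - 1/(2j - 1)` and the alternating sum of the binomial
coefficients vanishes, the left-hand side is governed by the partial-fraction identity
`∑ⱼ (-1)ʲ C(m, j)/(x + j) = m!/∏_{i ≤ m} (x + i)` at `x = -1/2`, which evaluates it to
`2 - (2n+2)‼/(2n+1)‼`. On the other side, `Bₙ` telescopes to `(2n+2)‼/(2n+1)‼ - 2`.
-/

open Finset Nat

theorem sum_range_neg_one_pow_mul_choose_div {K : Type*} [Field K] (m : ℕ) {x : K}
    (hx : ∀ j : ℕ, x + j ≠ 0) :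
    ∑ j ∈ range (m + 1), (-1) ^ j * (m.choose j : K) / (x + j) =
      m ! / ∏ i ∈ range (m + 1), (x + i) := by
  induction m generalizing x with
  | zero => simp
  | succ m ih =>
    have hx' : ∀ j : ℕ, x + 1 + j ≠ 0 := fun j => by
      convert hx (j + 1) using 1; push_cast; ring
    have hprod :
        ∏ i ∈ range (m + 2), (x + i) = (∏ i ∈ range (m + 1), (x + i)) * (x + (m + 1)) := by
      rw [prod_range_succ]; push_cast; ring
    have hprod' : ∏ i ∈ range (m + 2), (x + i) = (∏ i ∈ range (m + 1), (x + 1 + i)) * x := by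
      rw [prod_range_succ', Nat.cast_zero, add_zero]
      exact congrArg (· * x) (prod_congr rfl fun i _ => by push_cast; ring)
    have pascal := sum_choose_succ_mul (fun i _ => (-1 : K) ^ i / (x + i)) m
    simp only [push_cast, pow_succ, ← add_assoc, mul_div_assoc, mul_comm ((-1 : K) ^ _)] at pascal
    calc ∑ j ∈ range (m + 2), (-1) ^ j * ((m + 1).choose j : K) / (x + j)
        = ∑ j ∈ range (m + 1), (-1) ^ j * (m.choose j : K) / (x + j)
          - ∑ j ∈ range (m + 1), (-1) ^ j * (m.choose j : K) / (x + 1 + j) := by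
          simp only [mul_div_assoc, mul_comm ((-1 : K) ^ _)]
          rw [pascal, sub_eq_add_neg, ← sum_neg_distrib]
          exact congrArg _ (sum_congr rfl fun j _ => by ring)
      _ = m ! / ∏ i ∈ range (m + 1), (x + i) - m ! / ∏ i ∈ range (m + 1), (x + 1 + i) := by
          rw [ih hx, ih hx']
      _ = (m + 1)! / ∏ i ∈ range (m + 2), (x + i) := by
          have h0 : x ≠ 0 := by simpa using hx 0
          have hm : x + (m + 1) ≠ 0 := by simpa using hx (m + 1)
          rw [eq_div_of_mul_eq h0 (hprod'.symm.trans hprod), hprod, factorial_succ]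
          push_cast
          field_simp
          ring

theorem prod_range_neg_half_add {K : Type*} [Field K] [CharZero K] (n : ℕ) :
    ∏ i ∈ range (n + 2), (-1 / 2 + (i : K)) = -((2 * n + 1)‼ : K) / 2 ^ (n + 2) := by
  induction n with
  | zero => norm_num [doubleFactorial]
  | succ n ih =>
    rw [prod_range_succ, ih, show 2 * (n + 1) + 1 = 2 * n + 1 + 2 by ring, doubleFactorial_add_two]
    push_cast
    field_simp
    ring

theorem two_mul_natCast_sub_one_ne_zero {R : Type*} [Ring R] [CharZero R] (j : ℕ) :
    (2 * j - 1 : R) ≠ 0 := by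
  rw [sub_ne_zero]
  exact_mod_cast (by omega : 2 * j ≠ 1)

theorem sum_range_neg_one_pow_mul_choose_div_two_mul_sub_one {K : Type*} [Field K] [CharZero K]
    (n : ℕ) :
    ∑ j ∈ range (n + 2), (-1) ^ j * ((n + 1).choose j : K) / (2 * j - 1) =
      -(((2 * n + 2)‼ : K) / (2 * n + 1)‼) := by
  have hhalf : ∀ j : ℕ, (-1 / 2 + j : K) = (2 * j - 1) / 2 := fun j => by ring
  have hx : ∀ j : ℕ, (-1 / 2 + j : K) ≠ 0 := fun j => by
    rw [hhalf]; exact div_ne_zero (two_mul_natCast_sub_one_ne_zero j) two_ne_zero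
  have hterm : ∀ j ∈ range (n + 2), (-1) ^ j * ((n + 1).choose j : K) / (2 * j - 1) =
      2⁻¹ * ((-1) ^ j * ((n + 1).choose j : K) / (-1 / 2 + j)) := fun j _ => by
    rw [hhalf]; field_simp
  rw [sum_congr rfl hterm, ← mul_sum, sum_range_neg_one_pow_mul_choose_div (n + 1) hx,
    prod_range_neg_half_add, show 2 * n + 2 = 2 * (n + 1) by ring, doubleFactorial_two_mul]
  push_cast
  field_simp
  ring

theorem sum_Icc_doubleFactorial_div {K : Type*} [Field K] [CharZero K] (n : ℕ) :
    ∑ k ∈ Icc 1 n, ((2 * k)‼ : K) / (2 * k + 1)‼ = ((2 * n + 2)‼ : K) / (2 * n + 1)‼ - 2 := by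
  induction n with
  | zero => norm_num [doubleFactorial]
  | succ n ih =>
    have hodd : (2 * (n + 1) + 1)‼ = (2 * n + 3) * (2 * n + 1)‼ := doubleFactorial_add_two _
    have heven : (2 * (n + 1) + 2)‼ = (2 * n + 4) * (2 * n + 2)‼ := doubleFactorial_add_two _
    have h1 : ((2 * n + 1)‼ : K) ≠ 0 := Nat.cast_ne_zero.2 (doubleFactorial_pos _).ne'
    have h3 : (2 * n + 3 : K) ≠ 0 := by exact_mod_cast (by omega : 2 * n + 3 ≠ 0)
    rw [sum_Icc_succ_top (by omega), ih, hodd, heven, show 2 * (n + 1) = 2 * n + 2 by ring]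
    push_cast
    field_simp
    ring

theorem stmt13_general (n : ℕ) :
    (1 / 2 : ℝ) +
        ∑ j ∈ Finset.Icc 1 (n + 1),
          (-1 : ℝ) ^ (j + 1) * ((2 * (j : ℝ) - 3) / (2 * (2 * (j : ℝ) - 1))) *
            ((n + 1).choose j : ℝ) =
      -∑ k ∈ Finset.Icc 1 n,
          (Nat.doubleFactorial (2 * k) : ℝ) / (Nat.doubleFactorial (2 * k + 1) : ℝ) := by
  set f : ℕ → ℝ := fun j =>
    (-1 : ℝ) ^ (j + 1) * ((2 * (j : ℝ) - 3) / (2 * (2 * (j : ℝ) - 1))) * ((n + 1).choose j : ℝ)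
  have hdecomp : ∀ j ∈ range (n + 2), f j = -2⁻¹ * ((-1) ^ j * ((n + 1).choose j : ℝ)) +
      (-1) ^ j * ((n + 1).choose j : ℝ) / (2 * j - 1) :=
    fun j _ => by
      have := two_mul_natCast_sub_one_ne_zero (R := ℝ) j
      simp only [f]
      field_simp
      ring
  have halt : ∑ j ∈ range (n + 2), (-1 : ℝ) ^ j * ((n + 1).choose j : ℝ) = 0 := by
    exact_mod_cast Int.alternating_sum_range_choose_of_ne n.succ_ne_zero
  have hfull : ∑ j ∈ range (n + 2), f j = -(((2 * n + 2)‼ : ℝ) / (2 * n + 1)‼) := by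
    rw [sum_congr rfl hdecomp, sum_add_distrib, ← mul_sum, halt,
      sum_range_neg_one_pow_mul_choose_div_two_mul_sub_one, mul_zero, zero_add]
  rw [sum_range_eq_add_Ico f (by omega), show Ico 1 (n + 2) = Icc 1 (n + 1) from
    Ico_add_one_right_eq_Icc 1 (n + 1)] at hfull
  have hf0 : f 0 = -3 / 2 := by norm_num [f]
  rw [hf0] at hfull
  rw [sum_Icc_doubleFactorial_div]
  linarith

/-- For every integer `n ≥ 1`,
`1/2 + Σ_{j=1}^{n+1} (−1)^{j+1}·((2j−3)/(2(2j−1)))·C(n+1,j) = −Σ_{k=1}^{n} (2k)‼/(2k+1)‼`,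
i.e. the coefficient `c₁` of the auxiliary function `h` equals `−Bₙ`. -/
theorem stmt13 (n : ℕ) (hn : 1 ≤ n) :
    (1 / 2 : ℝ) +
        ∑ j ∈ Finset.Icc 1 (n + 1),
          (-1 : ℝ) ^ (j + 1) * ((2 * (j : ℝ) - 3) / (2 * (2 * (j : ℝ) - 1))) *
            ((n + 1).choose j : ℝ) =
      -∑ k ∈ Finset.Icc 1 n,
          (Nat.doubleFactorial (2 * k) : ℝ) / (Nat.doubleFactorial (2 * k + 1) : ℝ) :=
  stmt13_general n
end
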